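/- Fix a vertex v₀ of G, and let c̃ be a function from V∖{v₀} to ℤ with c̃ ≥ 0. Then c̃ is a superstable configuration on G with sink v₀ if and only if the configuration on K(G) taking value 0 at v₀ and value c̃(v) + 1 at each v ≠ v₀ is superstable on K(G). -/

import Mathlib

namespace Soap

variable {V : Type*} {W : Type*}

/-- A partial orientation of `G`: a relation `O` such that `O u v` implies `{u,v}` is an
edge and the reverse pair is not in `O`. -/
def IsPartialOrientation (G : SimpleGraph V) (O : V → V → Prop) : Prop :=
  ∀ u v, O u v → G.Adj u v ∧ ¬ O v u

/-- The edge `{u,v}` of `G` is blank for the partial orientation `O`. -/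
def IsBlank (G : SimpleGraph V) (O : V → V → Prop) (u v : V) : Prop :=
  G.Adj u v ∧ ¬ O u v ∧ ¬ O v u

/-- A `G`-semiorientation: a partial orientation such that every potential cycle
(a cycle of `G`, here traversed as `c : ZMod n → V`, none of whose edges is oriented
against the traversal) has strictly more blank edges than oriented edges. -/
def IsSemiorientation (G : SimpleGraph V) (O : V → V → Prop) : Prop :=
  IsPartialOrientation G O ∧
  ∀ (n : ℕ) (c : ZMod n → V), 3 ≤ n → Function.Injective c →
    (∀ i, G.Adj (c i) (c (i + 1))) →
    (∀ i, ¬ O (c (i + 1)) (c i)) →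
    {i : ZMod n | O (c i) (c (i + 1))}.ncard <
      {i : ZMod n | IsBlank G O (c i) (c (i + 1))}.ncard

/-- A semiorder (unit interval order) given by its strict order relation `lt`. -/
def IsSemiorder (lt : V → V → Prop) : Prop :=
  ∃ t : V → ℝ, ∀ u v, lt u v ↔ t u + 1 < t v

/-- Compatibility of a (semi)order `lt` and a partial orientation `O`:
for every edge `{u,v}`, `u < v` iff `(u,v) ∈ O`. -/
def Compatible (G : SimpleGraph V) (lt : V → V → Prop) (O : V → V → Prop) : Prop :=
  ∀ u v, G.Adj u v → (lt u v ↔ O u v)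

/-- Indegree of a vertex with respect to a partial orientation. -/
noncomputable def indeg (O : V → V → Prop) (v : V) : ℕ := {u | O u v}.ncard

/-- `n_P(v)`: the number of vertices `u` with `u < v` and `{u,v}` an edge of `G`. -/
noncomputable def nP (G : SimpleGraph V) (lt : V → V → Prop) (v : V) : ℕ :=
  {u | lt u v ∧ G.Adj u v}.ncard

/-- Degree of a vertex in a graph. -/
noncomputable def vdeg (H : SimpleGraph W) (v : W) : ℕ := {u | H.Adj v u}.ncard

/-- A configuration `c` on the graph `H` with sink `q` is superstable:
`c ≥ 0` off the sink, and no nonempty set `X` of nonsink vertices can be fired legally,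
i.e. `c - Δ̃·1_X ≥ 0` fails (coordinatewise off the sink), where
`(Δ̃·1_X)_v = deg(v)·1_X(v) - #{u ∈ X : u ∼ v}`. -/
def Superstable (H : SimpleGraph W) (q : W) (c : W → ℤ) : Prop :=
  (∀ v, v ≠ q → 0 ≤ c v) ∧
  ¬ ∃ X : Set W, X.Nonempty ∧ q ∉ X ∧
    ∀ v, v ≠ q →
      0 ≤ c v - X.indicator (fun u => (vdeg H u : ℤ)) v + ({u | u ∈ X ∧ H.Adj v u}.ncard : ℤ)

/-- `K(G)`: the graph `G` with a new vertex `none` adjoined, joined to every vertex of `G`. -/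
def KG (G : SimpleGraph V) : SimpleGraph (Option V) where
  Adj x y := x ≠ y ∧ ∀ u v, x = some u → y = some v → G.Adj u v
  symm := by
    constructor
    rintro x y ⟨hne, h⟩
    exact ⟨hne.symm, fun u v hu hv => (h v u hv hu).symm⟩
  loopless := by constructor; rintro x ⟨hne, -⟩; exact hne rfl

/-- A divisor `c : V → ℤ` on `G` is quasi-superstable if the configuration
`v ↦ c v + 1` on `K(G)` (with sink the new vertex) is superstable. -/
def QuasiSuperstable (G : SimpleGraph V) (c : V → ℤ) : Prop :=
  Superstable (KG G) none (fun x => x.elim 0 (fun v => c v + 1))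

/-- An acyclic orientation of `G`: a partial orientation in which every edge is
oriented and which contains no directed cycle. -/
def IsAcyclicOrientation (G : SimpleGraph V) (O : V → V → Prop) : Prop :=
  IsPartialOrientation G O ∧ (∀ u v, G.Adj u v → O u v ∨ O v u) ∧
  ¬ ∃ (n : ℕ) (c : ZMod n → V), 0 < n ∧ Function.Injective c ∧ ∀ i, O (c i) (c (i + 1))

/-- The union of the hyperplanes `x u - x v = 1` of the `G`-semiorder arrangement. -/
def hyperplanesUnion (G : SimpleGraph V) : Set (V → ℝ) :=
  {x | ∃ u v, G.Adj u v ∧ x u - x v = 1}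

/-- The regions of the `G`-semiorder arrangement: connected components of the
complement of the union of its hyperplanes. -/
def Regions (G : SimpleGraph V) : Set (Set (V → ℝ)) :=
  {r | ∃ x, x ∉ hyperplanesUnion G ∧ r = connectedComponentIn (hyperplanesUnion G)ᶜ x}

/-- The candidate region attached to a partial orientation `O`. -/
def rho (G : SimpleGraph V) (O : V → V → Prop) : Set (V → ℝ) :=
  {x | (∀ u v, O u v → x v - x u > 1) ∧ (∀ u v, IsBlank G O u v → |x u - x v| < 1)}

/-- `K(G)₀`: the graph `G` with an edge `{v, v₀}` added for each vertex `v ≠ v₀`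
not already adjacent to `v₀`. -/
def KG0 (G : SimpleGraph V) (v₀ : V) : SimpleGraph V where
  Adj u v := G.Adj u v ∨ (u ≠ v ∧ (u = v₀ ∨ v = v₀))
  symm := by
    constructor
    rintro u v (h | ⟨hne, h⟩)
    · exact Or.inl h.symm
    · exact Or.inr ⟨hne.symm, h.symm⟩
  loopless := by
    constructor
    rintro v (h | ⟨hne, -⟩)
    · exact G.irrefl h
    · exact hne rfl

/-- The union of the hyperplanes of the `(G,v₀)`-semiorder arrangement. -/
def hyperplanesUnion0 (G : SimpleGraph V) (v₀ : V) : Set ({v : V // v ≠ v₀} → ℝ) :=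
  {x | ∃ u v : {v : V // v ≠ v₀}, G.Adj u.1 v.1 ∧ x u - x v = 1}

/-- The regions of the `(G,v₀)`-semiorder arrangement. -/
def Regions0 (G : SimpleGraph V) (v₀ : V) : Set (Set ({v : V // v ≠ v₀} → ℝ)) :=
  {r | ∃ x, x ∉ hyperplanesUnion0 G v₀ ∧
    r = connectedComponentIn (hyperplanesUnion0 G v₀)ᶜ x}

/-- The candidate region attached to a partial orientation `O`, in the sink context. -/
def rho0 (G : SimpleGraph V) (v₀ : V) (O : V → V → Prop) :
    Set ({v : V // v ≠ v₀} → ℝ) :=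
  {x | (∀ u v : {v : V // v ≠ v₀}, O u.1 v.1 → x v - x u > 1) ∧
    (∀ u v : {v : V // v ≠ v₀}, IsBlank G O u.1 v.1 → |x u - x v| < 1)}

lemma kg_adj_some_some (G : SimpleGraph V) {u v : V} :
    (KG G).Adj (some u) (some v) ↔ G.Adj u v := by
  constructor
  · rintro ⟨-, h⟩; exact h u v rfl rfl
  · intro h
    refine ⟨by simpa using G.ne_of_adj h, fun a b ha hb => ?_⟩
    injection ha with ha; injection hb with hb
    subst ha; subst hb; exact h

lemma kg_adj_some_none (G : SimpleGraph V) (v : V) : (KG G).Adj (some v) none :=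
  ⟨by simp, fun a b _ hb => by cases hb⟩

lemma kg_nbhd (G : SimpleGraph V) (v : V) :
    {u | (KG G).Adj (some v) u} = insert none (some '' {u | G.Adj v u}) := by
  ext x
  cases x with
  | none => simp [kg_adj_some_none]
  | some u => simp [kg_adj_some_some]

lemma vdeg_kg_some [Fintype V] (G : SimpleGraph V) (v : V) :
    vdeg (KG G) (some v) = vdeg G v + 1 := by
  rw [vdeg, kg_nbhd, Set.ncard_insert_of_notMem (by simp),
    Set.ncard_image_of_injective _ (Option.some_injective V), vdeg]

lemma kg_count (G : SimpleGraph V) (Y : Set V) (v : V) :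
    {u : Option V | u ∈ some '' Y ∧ (KG G).Adj (some v) u}
      = some '' {u | u ∈ Y ∧ G.Adj v u} := by
  ext x
  cases x with
  | none => simp
  | some u => simp [kg_adj_some_some, and_comm]

/-- Fix `v₀ ∈ V`, and let `c̃ : V∖{v₀} → ℤ` with `c̃ ≥ 0` (modeled as `c : V → ℤ`
with the value at the sink `v₀` irrelevant).  Then `c̃` is superstable on `G` with
sink `v₀` iff the configuration on `K(G)` taking value `0` at `v₀` and `c̃ v + 1`
at each `v ≠ v₀` is superstable on `K(G)`. -/
theorem stmt17 {V : Type*} [Fintype V] [DecidableEq V] (G : SimpleGraph V)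
    (hconn : G.Connected) (v₀ : V) (c : V → ℤ) (hc : ∀ v, v ≠ v₀ → 0 ≤ c v) :
    Superstable G v₀ c ↔
    Superstable (KG G) none
      (fun x => x.elim 0 (fun v => if v = v₀ then 0 else c v + 1)) := by
  have hcount : ∀ (Y : Set V) (v : V),
      ({u : Option V | u ∈ some '' Y ∧ (KG G).Adj (some v) u}.ncard : ℤ)
        = ({u | u ∈ Y ∧ G.Adj v u}.ncard : ℤ) := by
    intro Y v
    rw [kg_count, Set.ncard_image_of_injective _ (Option.some_injective V)]
  have hind : ∀ (Y : Set V) (v : V),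
      (some '' Y).indicator (fun u => (vdeg (KG G) u : ℤ)) (some v)
        = Y.indicator (fun u => (vdeg G u : ℤ) + 1) v := by
    intro Y v
    by_cases hv : v ∈ Y
    · rw [Set.indicator_of_mem ((Option.some_injective V).mem_set_image.mpr hv),
        Set.indicator_of_mem hv, vdeg_kg_some]
      push_cast; ring
    · rw [Set.indicator_of_notMem (fun h => hv ((Option.some_injective V).mem_set_image.mp h)),
        Set.indicator_of_notMem hv]
  constructor
  · rintro ⟨-, h2⟩
    refine ⟨?_, ?_⟩
    · rintro (_ | v) hx
      · exact absurd rfl hx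
      · simp only [Option.elim]
        split_ifs with h
        · exact le_refl 0
        · linarith [hc v h]
    · rintro ⟨X, hXne, hXnone, hX⟩
      set Y : Set V := {v | some v ∈ X} with hYdef
      have hXY : X = some '' Y := by
        ext x
        cases x with
        | none => simp [hXnone]
        | some u => simp [hYdef]
      rw [hXY] at hX
      have hv0 : v₀ ∉ Y := by
        intro hmem
        have h1 := hX (some v₀) (by simp)
        rw [hind, hcount] at h1
        rw [Set.indicator_of_mem hmem] at h1
        simp only [Option.elim, eq_self_iff_true, if_true] at h1
        have hle : ({u | u ∈ Y ∧ G.Adj v₀ u}.ncard : ℤ) ≤ (vdeg G v₀ : ℤ) := by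
          rw [vdeg]
          exact_mod_cast Set.ncard_le_ncard
            (s := {u | u ∈ Y ∧ G.Adj v₀ u}) (t := {u | G.Adj v₀ u})
            (fun u hu => hu.2) (Set.toFinite _)
        linarith
      refine h2 ⟨Y, ?_, hv0, ?_⟩
      · obtain ⟨x, hx⟩ := hXne
        rw [hXY] at hx
        obtain ⟨v, hv, rfl⟩ := hx
        exact ⟨v, hv⟩
      · intro v hv
        have h1 := hX (some v) (by simp)
        rw [hind, hcount] at h1
        simp only [Option.elim, if_neg hv] at h1
        by_cases hmem : v ∈ Y
        · rw [Set.indicator_of_mem hmem] at h1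
          rw [Set.indicator_of_mem hmem]
          linarith
        · rw [Set.indicator_of_notMem hmem] at h1
          rw [Set.indicator_of_notMem hmem]
          have := hc v hv
          have hpos : (0 : ℤ) ≤ ({u | u ∈ Y ∧ G.Adj v u}.ncard : ℤ) := Int.natCast_nonneg _
          linarith
  · rintro ⟨-, h2⟩
    refine ⟨hc, ?_⟩
    rintro ⟨Y, hYne, hY0, hY⟩
    refine h2 ⟨some '' Y, hYne.image _, by simp, ?_⟩
    rintro (_ | v) hx
    · exact absurd rfl hx
    · rw [hind, hcount]
      simp only [Option.elim]
      by_cases hv : v = v₀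
      · rw [if_pos hv, Set.indicator_of_notMem (show v ∉ Y by rw [hv]; exact hY0)]
        have hpos : (0 : ℤ) ≤ ({u | u ∈ Y ∧ G.Adj v u}.ncard : ℤ) := Int.natCast_nonneg _
        linarith
      · rw [if_neg hv]
        by_cases hmem : v ∈ Y
        · have h1 := hY v hv
          rw [Set.indicator_of_mem hmem] at h1
          rw [Set.indicator_of_mem hmem]
          linarith
        · rw [Set.indicator_of_notMem hmem]
          have := hc v hv
          have hpos : (0 : ℤ) ≤ ({u | u ∈ Y ∧ G.Adj v u}.ncard : ℤ) := Int.natCast_nonneg _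
          linarith

end Soap
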